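/- With Δ and ε as above, (ε ⊗ id_A) ∘ Δ = id_A, while (id_A ⊗ ε) ∘ Δ satisfies (id_A ⊗ ε)(Δ(v₊)) = YZ · v₊ and (id_A ⊗ ε)(Δ(v₋)) = v₋; in particular (id_A ⊗ ε) ∘ Δ ≠ id_A in A (the counit is only one-sided). -/

import Mathlib

open TensorProduct

noncomputable section

/-- The grading group of `R = ℤ[X,Y,Z,Z⁻¹]/(X²=1, Y²=1)`. -/
abbrev Gcov : Type := Multiplicative (ZMod 2 × ZMod 2 × ℤ)

/-- The ring `R = ℤ[X,Y,Z,Z⁻¹]/(X²=1, Y²=1)`, realized as the group algebra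
`ℤ[C₂ × C₂ × ℤ]`. -/
abbrev Rcov : Type := MonoidAlgebra ℤ Gcov

/-- The unit `Y` of `R`. -/
def uY : Rcovˣ :=
  (MonoidAlgebra.of ℤ Gcov).toHomUnits
    (Multiplicative.ofAdd ((0 : ZMod 2), (1 : ZMod 2), (0 : ℤ)))

/-- The unit `Z` of `R`. -/
def uZ : Rcovˣ :=
  (MonoidAlgebra.of ℤ Gcov).toHomUnits
    (Multiplicative.ofAdd ((0 : ZMod 2), (0 : ZMod 2), (1 : ℤ)))

/-- `A = R·v₊ ⊕ R·v₋` and its basis elements. -/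
abbrev Acov : Type := Rcov × Rcov

def vplus : Acov := (1, 0)

def vminus : Acov := (0, 1)

/-- The counit `ε : A → R`, `ε(v₊) = 0`, `ε(v₋) = 1`. -/
def epsLin : Acov →ₗ[Rcov] Rcov := LinearMap.snd Rcov Rcov Rcov

/-- `Δ : A → A ⊗ A`, `Δ(v₊) = v₋ ⊗ v₊ + YZ·v₊ ⊗ v₋`, `Δ(v₋) = v₋ ⊗ v₋`. -/
def deltaLin : Acov →ₗ[Rcov] (Acov ⊗[Rcov] Acov) :=
  (LinearMap.fst Rcov Rcov Rcov).smulRight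
      (vminus ⊗ₜ[Rcov] vplus + ((uY : Rcov) * (uZ : Rcov)) • (vplus ⊗ₜ[Rcov] vminus))
    + (LinearMap.snd Rcov Rcov Rcov).smulRight (vminus ⊗ₜ[Rcov] vminus)

/-- `(ε ⊗ id_A) : A ⊗ A → A` (after the identification `R ⊗ A ≅ A`). -/
def counitL : (Acov ⊗[Rcov] Acov) →ₗ[Rcov] Acov :=
  (TensorProduct.lid Rcov Acov).toLinearMap ∘ₗ LinearMap.rTensor Acov epsLin

/-- `(id_A ⊗ ε) : A ⊗ A → A` (after the identification `A ⊗ R ≅ A`). -/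
def counitR : (Acov ⊗[Rcov] Acov) →ₗ[Rcov] Acov :=
  (TensorProduct.rid Rcov Acov).toLinearMap ∘ₗ LinearMap.lTensor Acov epsLin

lemma yz_ne_one : ((uY : Rcov) * (uZ : Rcov)) ≠ 1 := by
  simp only [uY, uZ, MonoidHom.coe_toHomUnits, MonoidAlgebra.of_apply,
    MonoidAlgebra.single_mul_single, one_mul, MonoidAlgebra.one_def]
  show (MonoidAlgebra.single _ _ : Rcov) ≠ MonoidAlgebra.single _ _
  rw [Ne, MonoidAlgebra.single_inj]
  push_neg
  refine ⟨fun h => ?_, by norm_num⟩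
  have := congrArg Multiplicative.toAdd h
  simp [Prod.ext_iff] at this

lemma counitR_plus' : counitR (deltaLin vplus) = ((uY : Rcov) * (uZ : Rcov)) • vplus := by
  simp [counitR, deltaLin, epsLin, vplus, vminus]

/-- `(ε ⊗ id) ∘ Δ = id`, while `(id ⊗ ε) ∘ Δ` sends `v₊ ↦ YZ·v₊` and
`v₋ ↦ v₋`; in particular `(id ⊗ ε) ∘ Δ ≠ id`: the counit is only one-sided. -/
theorem counit_one_sided :
    counitL ∘ₗ deltaLin = LinearMap.id ∧
    counitR (deltaLin vplus) = ((uY : Rcov) * (uZ : Rcov)) • vplus ∧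
    counitR (deltaLin vminus) = vminus ∧
    counitR ∘ₗ deltaLin ≠ LinearMap.id := by
  refine ⟨?_, counitR_plus', by simp [counitR, deltaLin, epsLin, vplus, vminus], ?_⟩
  · ext x <;> simp [counitL, deltaLin, epsLin, vplus, vminus]
  · intro h
    have h1 := DFunLike.congr_fun h vplus
    rw [LinearMap.comp_apply, counitR_plus', LinearMap.id_apply] at h1
    exact yz_ne_one (by simpa [vplus] using congrArg Prod.fst h1)

end
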